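/- Let r ≥ 3 and let G be a C_{1r}-free linear r-graph with an edge e = {u_1,...,u_r} where d(u_1) = d(u_2) = (r-1)^2 + 1 and d(u_i) ≥ (r-1)^2 for 3 ≤ i ≤ r. Define the bipartite graph H_2 whose two sides are the u_2-edges other than e and the u_1-edges other than e, with adjacency given by nonempty intersection. Then H_2 is (r-1)-regular with both sides of size (r-1)^2, and H_2 contains a complete bipartite subgraph K_{r-1,r-1}. -/

import Mathlib

open Finset

/-- A linear `r`-uniform hypergraph: every edge has `r` vertices and
any two distinct edges intersect in at most one vertex. -/
def IsLinear {V : Type*} [DecidableEq V] (r : ℕ) (E : Finset (Finset V)) : Prop :=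
  (∀ e ∈ E, e.card = r) ∧ ∀ e ∈ E, ∀ f ∈ E, e ≠ f → (e ∩ f).card ≤ 1

/-- The degree of a vertex: the number of edges containing it. -/
def degree {V : Type*} [DecidableEq V] (E : Finset (Finset V)) (v : V) : ℕ :=
  (E.filter (fun e => v ∈ e)).card

/-- `E` contains a copy of the `r`-crown `C_{1r}`: `r` pairwise disjoint edges
together with one edge meeting each of them in exactly one vertex. -/
def HasCrown {V : Type*} [DecidableEq V] (r : ℕ) (E : Finset (Finset V)) : Prop :=
  ∃ e ∈ E, ∃ f : Fin r → Finset V,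
    (∀ i, f i ∈ E) ∧ (∀ i, f i ≠ e) ∧
    (∀ i j, i ≠ j → f i ∩ f j = ∅) ∧
    (∀ i, (e ∩ f i).card = 1)

/-- `E` contains a copy of `C*`: `r-2` edges pairwise meeting exactly in a common
vertex `v`, two further edges disjoint from each other and from all the others,
and one edge meeting each of the `r` edges in exactly one vertex, avoiding `v`. -/
def HasCStar {V : Type*} [DecidableEq V] (r : ℕ) (E : Finset (Finset V)) : Prop :=
  ∃ v : V, ∃ e ∈ E, ∃ f : Fin r → Finset V,
    (∀ i, f i ∈ E) ∧ (∀ i, f i ≠ e) ∧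
    (∀ i : Fin r, (i : ℕ) < r - 2 → v ∈ f i) ∧
    (∀ i j : Fin r, (i : ℕ) < r - 2 → (j : ℕ) < r - 2 → i ≠ j → f i ∩ f j = {v}) ∧
    (∀ i j : Fin r, r - 2 ≤ (i : ℕ) → i ≠ j → f i ∩ f j = ∅) ∧
    (∀ i, (e ∩ f i).card = 1) ∧ v ∉ e

/-!
Call an edge `h ≠ e` through a vertex `x ∈ e` a leg of `e` at `x`; a crown is `e` together with
pairwise disjoint legs at all of its vertices. By linearity at most `|S|` edges through `x` meet a
set `S ∌ x`, so a vertex of degree `> |S| + 1` has a leg avoiding `S`. As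
`(r - 2)(r - 1) + 1 < (r - 1)²`, this lets us choose greedily pairwise disjoint legs at the `r - 2`
vertices of `e` other than `u₁, u₂`, all avoiding one further edge given in advance.

Regularity: if a vertex `w ≠ u₂` of a `u₂`-edge `f` lay on no `u₁`-edge, take such legs avoiding
`f`. Apart from `w`, they and `f` use at most `(r - 1)² - 1` vertices off `e`, so some leg at `u₁`
avoids all of them, hence all of `f`: a crown. Thus, by linearity, the `u₁`-edges meeting `f`
correspond to the `r - 1` vertices of `f - u₂`.

`K_{r-1,r-1}`: fix such legs; they use only `(r - 2)(r - 1)` vertices off `e`, so at least `r - 1`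
of the `(r - 1)²` edges through `u₁` (resp. `u₂`) other than `e` avoid them, and two disjoint ones
would complete a crown.
-/

section Hypergraph

variable {V : Type*} [DecidableEq V] {r : ℕ} {E : Finset (Finset V)} {e f g : Finset V}
  {S : Finset V} {p q x y : V}

lemma sub_one_add_sub_two_mul_sub_one (r : ℕ) : r - 1 + (r - 2) * (r - 1) = (r - 1) ^ 2 := by
  rcases r with _ | _ | r <;> simp; ring

namespace IsLinear

lemma eq_of_mem_of_mem (hlin : IsLinear r E) (he : e ∈ E) (hf : f ∈ E) (hef : e ≠ f)
    (hxe : x ∈ e) (hxf : x ∈ f) (hye : y ∈ e) (hyf : y ∈ f) : x = y :=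
  card_le_one.mp (hlin.2 e he f hf hef) x (mem_inter.mpr ⟨hxe, hxf⟩) y (mem_inter.mpr ⟨hye, hyf⟩)

lemma card_filter_mem_mem_le_one (hlin : IsLinear r E) (hxy : x ≠ y) :
    (E.filter fun f => x ∈ f ∧ y ∈ f).card ≤ 1 := by
  refine card_le_one.mpr fun f hf g hg => ?_
  simp only [mem_filter] at hf hg
  by_contra hfg
  exact hxy (hlin.eq_of_mem_of_mem hf.1 hg.1 hfg hf.2.1 hg.2.1 hf.2.2 hg.2.2)

lemma card_filter_not_disjoint_le (hlin : IsLinear r E) (hx : x ∉ S) :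
    (E.filter fun f => x ∈ f ∧ ¬Disjoint f S).card ≤ S.card := by
  calc _ ≤ (S.biUnion fun y => E.filter fun f => x ∈ f ∧ y ∈ f).card := by
        refine card_le_card fun f hf => ?_
        obtain ⟨hfE, hxf, hfS⟩ := mem_filter.mp hf
        obtain ⟨y, hyf, hyS⟩ := not_disjoint_iff.mp hfS
        exact mem_biUnion.mpr ⟨y, hyS, mem_filter.mpr ⟨hfE, hxf, hyf⟩⟩
    _ ≤ ∑ _y ∈ S, 1 := card_biUnion_le.trans <| sum_le_sum fun y hy =>
        hlin.card_filter_mem_mem_le_one (ne_of_mem_of_not_mem hy hx).symm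
    _ = S.card := by simp

lemma degree_le_card_filter_disjoint (hlin : IsLinear r E) (hx : x ∉ S) (e : Finset V) :
    degree E x ≤ ((E.filter fun f => x ∈ f ∧ f ≠ e).filter (Disjoint · S)).card + S.card + 1 := by
  set good := (E.filter fun f => x ∈ f ∧ f ≠ e).filter (Disjoint · S)
  set bad := E.filter fun f => x ∈ f ∧ ¬Disjoint f S
  have hsub : E.filter (x ∈ ·) ⊆ good ∪ bad ∪ {e} := by
    intro f hf
    simp only [good, bad, mem_filter, mem_union, mem_singleton] at hf ⊢
    tauto
  calc degree E x ≤ (good ∪ bad ∪ {e}).card := card_le_card hsub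
    _ ≤ good.card + bad.card + 1 :=
        (card_union_le _ _).trans (add_le_add (card_union_le _ _) (card_singleton e).le)
    _ ≤ good.card + S.card + 1 := by gcongr; exact hlin.card_filter_not_disjoint_le hx

lemma exists_mem_ne_disjoint (hlin : IsLinear r E) (hx : x ∉ S) (e : Finset V)
    (hS : S.card + 1 < degree E x) : ∃ f ∈ E, x ∈ f ∧ f ≠ e ∧ Disjoint f S := by
  have := hlin.degree_le_card_filter_disjoint hx e
  obtain ⟨f, hf⟩ := card_pos.mp (by omega :
    0 < ((E.filter fun f => x ∈ f ∧ f ≠ e).filter (Disjoint · S)).card)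
  simp only [mem_filter] at hf
  exact ⟨f, hf.1.1, hf.1.2.1, hf.1.2.2, hf.2⟩

lemma disjoint_of_disjoint_sdiff (hlin : IsLinear r E) (he : e ∈ E) (hf : f ∈ E) (hg : g ∈ E)
    (hfe : f ≠ e) (hge : g ≠ e) (hpf : p ∈ f) (hpe : p ∈ e) (hqg : q ∈ g) (hqe : q ∈ e)
    (hpq : p ≠ q) (hoff : Disjoint f (g \ e)) : Disjoint f g := by
  refine disjoint_left.mpr fun y hyf hyg => ?_
  by_cases hye : y ∈ e
  · exact hpq ((hlin.eq_of_mem_of_mem hf he hfe hpf hpe hyf hye).trans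
      (hlin.eq_of_mem_of_mem hg he hge hyg hye hqg hqe))
  · exact disjoint_left.mp hoff hyf (mem_sdiff.mpr ⟨hyg, hye⟩)

end IsLinear

structure IsLegSystem (E : Finset (Finset V)) (e D : Finset V) (c : V → Finset V) : Prop where
  subset : D ⊆ e
  mem : ∀ x ∈ D, c x ∈ E
  mem_leg : ∀ x ∈ D, x ∈ c x
  ne : ∀ x ∈ D, c x ≠ e
  pairwiseDisjoint : (D : Set V).PairwiseDisjoint c

def legsOff (e D : Finset V) (c : V → Finset V) : Finset V :=
  D.biUnion fun x => c x \ e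

lemma disjoint_legsOff (e D : Finset V) (c : V → Finset V) : Disjoint (legsOff e D c) e := by
  simp only [legsOff, disjoint_biUnion_left]
  exact fun _ _ => sdiff_disjoint

lemma card_erase_erase (hp : p ∈ e) (hq : q ∈ e) (hpq : p ≠ q) :
    ((e.erase p).erase q).card = e.card - 2 := by
  rw [card_erase_of_mem (mem_erase.mpr ⟨hpq.symm, hq⟩), card_erase_of_mem hp]
  omega

lemma card_filter_mem_ne (he : e ∈ E) (hq : q ∈ e) :
    (E.filter fun f => q ∈ f ∧ f ≠ e).card = degree E q - 1 := by
  rw [degree, ← card_erase_of_mem (mem_filter.mpr ⟨he, hq⟩)]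
  congr 1
  ext f
  simp only [mem_filter, mem_erase]
  tauto

namespace IsLegSystem

variable {D : Finset V} {c : V → Finset V}

lemma insert (hc : IsLegSystem E e D c) (hpe : p ∈ e) (hpD : p ∉ D) (hf : f ∈ E) (hpf : p ∈ f)
    (hfe : f ≠ e) (hdisj : ∀ x ∈ D, Disjoint f (c x)) :
    IsLegSystem E e (insert p D) (Function.update c p f) := by
  have hupd : ∀ x ∈ D, Function.update c p f x = c x := fun x hx =>
    Function.update_of_ne (ne_of_mem_of_not_mem hx hpD) _ _
  refine ⟨insert_subset hpe hc.subset, ?_, ?_, ?_, ?_⟩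
  · intro x hx
    rcases mem_insert.mp hx with rfl | hx
    · simpa using hf
    · simpa [hupd x hx] using hc.mem x hx
  · intro x hx
    rcases mem_insert.mp hx with rfl | hx
    · simpa using hpf
    · simpa [hupd x hx] using hc.mem_leg x hx
  · intro x hx
    rcases mem_insert.mp hx with rfl | hx
    · simpa using hfe
    · simpa [hupd x hx] using hc.ne x hx
  · rw [coe_insert, Set.pairwiseDisjoint_insert_of_notMem (mod_cast hpD)]
    refine ⟨hc.pairwiseDisjoint.mono_on fun x hx => (hupd x hx).le, fun x hx => ?_⟩
    rw [Function.update_self, hupd x hx]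
    exact hdisj x hx

lemma card_legsOff_le (hlin : IsLinear r E) (hc : IsLegSystem E e D c) :
    (legsOff e D c).card ≤ D.card * (r - 1) := by
  calc (legsOff e D c).card ≤ ∑ x ∈ D, (c x \ e).card := card_biUnion_le
    _ ≤ ∑ _x ∈ D, (r - 1) := sum_le_sum fun x hx => by
        rw [← hlin.1 _ (hc.mem x hx), ← card_erase_of_mem (hc.mem_leg x hx)]
        exact card_le_card fun y hy => mem_erase.mpr
          ⟨fun hyx => (mem_sdiff.mp hy).2 (hyx ▸ hc.subset hx), (mem_sdiff.mp hy).1⟩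
    _ = D.card * (r - 1) := by rw [sum_const, smul_eq_mul]

lemma disjoint_of_disjoint_legsOff (hlin : IsLinear r E) (he : e ∈ E) (hc : IsLegSystem E e D c)
    (hpe : p ∈ e) (hpD : p ∉ D) (hf : f ∈ E) (hpf : p ∈ f) (hfe : f ≠ e)
    (hU : Disjoint f (legsOff e D c)) {x : V} (hx : x ∈ D) : Disjoint f (c x) :=
  hlin.disjoint_of_disjoint_sdiff he hf (hc.mem x hx) hfe (hc.ne x hx) hpf hpe (hc.mem_leg x hx)
    (hc.subset hx) (ne_of_mem_of_not_mem hx hpD).symm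
    (hU.mono_right (subset_biUnion_of_mem (fun x => c x \ e) hx))

lemma hasCrown (hlin : IsLinear r E) (he : e ∈ E) (hc : IsLegSystem E e e c) : HasCrown r E := by
  let u : Fin r → V := fun i => (e.equivFinOfCardEq (hlin.1 e he)).symm i
  have hu : ∀ i, u i ∈ e := fun i => coe_mem _
  have hinj : u.Injective := Subtype.val_injective.comp (Equiv.injective _)
  refine ⟨e, he, c ∘ u, fun i => hc.mem _ (hu i), fun i => hc.ne _ (hu i), fun i j hij => ?_,
    fun i => ?_⟩
  · exact disjoint_iff_inter_eq_empty.mp (hc.pairwiseDisjoint (hu i) (hu j) (hinj.ne hij))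
  · show (e ∩ c (u i)).card = 1
    have hle : (e ∩ c (u i)).card ≤ 1 := hlin.2 _ he _ (hc.mem _ (hu i)) (hc.ne _ (hu i)).symm
    have hpos : 0 < (e ∩ c (u i)).card :=
      card_pos.mpr ⟨u i, mem_inter.mpr ⟨hu i, hc.mem_leg _ (hu i)⟩⟩
    omega

lemma hasCrown_of_erase_erase (hlin : IsLinear r E) (he : e ∈ E)
    (hc : IsLegSystem E e ((e.erase p).erase q) c) (hp : p ∈ e) (hq : q ∈ e) (hpq : p ≠ q)
    (hf : f ∈ E) (hqf : q ∈ f) (hfe : f ≠ e) (hg : g ∈ E) (hpg : p ∈ g) (hge : g ≠ e)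
    (hfg : Disjoint f g) (hfc : ∀ x ∈ (e.erase p).erase q, Disjoint f (c x))
    (hgc : ∀ x ∈ (e.erase p).erase q, Disjoint g (c x)) : HasCrown r E := by
  have hcq := hc.insert hq (by simp) hf hqf hfe hfc
  rw [insert_erase (mem_erase.mpr ⟨hpq.symm, hq⟩)] at hcq
  have hcpq := hcq.insert hp (by simp) hg hpg hge fun x hx => by
    rcases eq_or_ne x q with rfl | hxq
    · simpa using hfg.symm
    · rw [Function.update_of_ne hxq]
      exact hgc x (mem_erase.mpr ⟨hxq, hx⟩)
  rw [insert_erase hp] at hcpq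
  exact hcpq.hasCrown hlin he

end IsLegSystem

lemma exists_isLegSystem (hlin : IsLinear r E) (he : e ∈ E) {T : Finset V} (hT : T.card ≤ r - 1)
    (hTe : Disjoint T e) {D : Finset V} (hD : D ⊆ e) (hDr : D.card ≤ r - 2)
    (hdeg : ∀ x ∈ D, (r - 1) ^ 2 ≤ degree E x) :
    ∃ c, IsLegSystem E e D c ∧ ∀ x ∈ D, Disjoint (c x) T := by
  induction D using Finset.induction_on with
  | empty => exact ⟨fun _ => ∅, ⟨empty_subset e, by simp, by simp, by simp, by simp⟩, by simp⟩
  | insert a s ha ih =>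
    rw [card_insert_of_notMem ha] at hDr
    have hae : a ∈ e := hD (mem_insert_self a s)
    obtain ⟨c, hc, hcT⟩ := ih ((subset_insert a s).trans hD) (by omega)
      fun x hx => hdeg x (mem_insert_of_mem hx)
    have haS : a ∉ T ∪ legsOff e s c := fun ha' =>
      disjoint_left.mp (disjoint_union_left.mpr ⟨hTe, disjoint_legsOff e s c⟩) ha' hae
    have hS : (T ∪ legsOff e s c).card + 1 < degree E a := by
      have := (card_union_le T (legsOff e s c)).trans (add_le_add hT (hc.card_legsOff_le hlin))
      have hs := Nat.mul_le_mul_right (r - 1) hDr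
      rw [add_one_mul] at hs
      have := sub_one_add_sub_two_mul_sub_one r
      have := hdeg a (mem_insert_self a s)
      omega
    obtain ⟨h, hhE, hah, hhe, hhS⟩ := hlin.exists_mem_ne_disjoint haS e hS
    refine ⟨Function.update c a h,
      hc.insert hae ha hhE hah hhe fun x hx => hc.disjoint_of_disjoint_legsOff hlin he hae ha hhE
        hah hhe (disjoint_union_right.mp hhS).2 hx, fun x hx => ?_⟩
    rcases mem_insert.mp hx with rfl | hx
    · simpa using (disjoint_union_right.mp hhS).1
    · simpa [Function.update_of_ne (ne_of_mem_of_not_mem hx ha)] using hcT x hx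

lemma exists_isLegSystem_erase_erase (hlin : IsLinear r E) (he : e ∈ E)
    (hdeg : ∀ x ∈ e, (r - 1) ^ 2 ≤ degree E x) (hp : p ∈ e) (hq : q ∈ e) (hpq : p ≠ q)
    {T : Finset V} (hT : T.card ≤ r - 1) (hTe : Disjoint T e) :
    ∃ c, IsLegSystem E e ((e.erase p).erase q) c ∧
      ∀ x ∈ (e.erase p).erase q, Disjoint (c x) T := by
  refine exists_isLegSystem hlin he hT hTe ((erase_subset _ _).trans (erase_subset _ _))
    (by rw [card_erase_erase hp hq hpq, hlin.1 e he])
    fun x hx => hdeg x (mem_of_mem_erase (mem_of_mem_erase hx))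

lemma card_erase_erase_legsOff_le (hlin : IsLinear r E) (he : e ∈ E) (hp : p ∈ e) (hq : q ∈ e)
    (hpq : p ≠ q) {c : V → Finset V} (hc : IsLegSystem E e ((e.erase p).erase q) c) :
    (legsOff e ((e.erase p).erase q) c).card ≤ (r - 2) * (r - 1) := by
  have := hc.card_legsOff_le hlin
  rwa [card_erase_erase hp hq hpq, hlin.1 e he] at this

lemma exists_mem_mem_of_not_hasCrown (hlin : IsLinear r E) (hfree : ¬HasCrown r E) (he : e ∈ E)
    (hdeg : ∀ x ∈ e, (r - 1) ^ 2 ≤ degree E x) (hp : p ∈ e) (hq : q ∈ e) (hpq : p ≠ q)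
    (hdp : (r - 1) ^ 2 < degree E p) (hf : f ∈ E) (hqf : q ∈ f) (hfe : f ≠ e) {w : V}
    (hwf : w ∈ f) (hwq : w ≠ q) : ∃ g ∈ E, p ∈ g ∧ g ≠ e ∧ w ∈ g := by
  by_contra! hno
  have hwe : w ∉ e := fun hwe => hwq (hlin.eq_of_mem_of_mem hf he hfe hwf hwe hqf hq)
  have hT : (f \ e).card ≤ r - 1 := by
    rw [← hlin.1 f hf, ← card_erase_of_mem hqf]
    exact card_le_card fun y hy =>
      mem_erase.mpr ⟨fun hyq => (mem_sdiff.mp hy).2 (hyq ▸ hq), (mem_sdiff.mp hy).1⟩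
  obtain ⟨c, hc, hcf⟩ := exists_isLegSystem_erase_erase hlin he hdeg hp hq hpq hT sdiff_disjoint
  set U := f \ e ∪ legsOff e ((e.erase p).erase q) c
  have hpU : p ∉ U.erase w := fun hp' => disjoint_left.mp
    (disjoint_union_left.mpr ⟨sdiff_disjoint, disjoint_legsOff _ _ _⟩) (mem_of_mem_erase hp') hp
  have hU : (U.erase w).card + 1 < degree E p := by
    rw [card_erase_add_one (mem_union_left _ (mem_sdiff.mpr ⟨hwf, hwe⟩))]
    have := (card_union_le _ _).trans
      (add_le_add hT (card_erase_erase_legsOff_le hlin he hp hq hpq hc))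
    have := sub_one_add_sub_two_mul_sub_one r
    omega
  obtain ⟨g, hg, hpg, hge, hgU⟩ := hlin.exists_mem_ne_disjoint hpU e hU
  -- `g` misses `w` as well, by the assumption to be refuted
  have hgU' : Disjoint g U :=
    (disjoint_insert_right.mpr ⟨hno g hg hpg hge, hgU⟩).mono_right (insert_erase_subset w U)
  refine hfree (hc.hasCrown_of_erase_erase hlin he hp hq hpq hf hqf hfe hg hpg hge ?_ ?_ ?_)
  · exact (hlin.disjoint_of_disjoint_sdiff he hg hf hge hfe hpg hp hqf hq hpq
      (hgU'.mono_right subset_union_left)).symm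
  · intro x hx
    exact (hlin.disjoint_of_disjoint_sdiff he (hc.mem x hx) hf (hc.ne x hx) hfe (hc.mem_leg x hx)
      (hc.subset hx) hqf hq (ne_of_mem_erase hx) (hcf x hx)).symm
  · exact fun x hx => hc.disjoint_of_disjoint_legsOff hlin he hp (by simp) hg hpg hge
      (hgU'.mono_right subset_union_right) hx

lemma card_filter_inter_nonempty_eq (hlin : IsLinear r E) (hfree : ¬HasCrown r E) (he : e ∈ E)
    (hdeg : ∀ x ∈ e, (r - 1) ^ 2 ≤ degree E x) (hp : p ∈ e) (hq : q ∈ e) (hpq : p ≠ q)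
    (hdp : (r - 1) ^ 2 < degree E p) (hf : f ∈ E) (hqf : q ∈ f) (hfe : f ≠ e) :
    ((E.filter fun g => p ∈ g ∧ g ≠ e).filter fun g => (f ∩ g).Nonempty).card = r - 1 := by
  have hpf : p ∉ f := fun hpf => hpq (hlin.eq_of_mem_of_mem hf he hfe hpf hp hqf hq)
  set P : V → Finset (Finset V) := fun w => E.filter fun g => p ∈ g ∧ g ≠ e ∧ w ∈ g
  have hP : ((E.filter fun g => p ∈ g ∧ g ≠ e).filter fun g => (f ∩ g).Nonempty) =
      (f.erase q).biUnion P := by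
    ext g
    simp only [P, mem_filter, mem_biUnion, mem_erase]
    constructor
    · rintro ⟨⟨hg, hpg, hge⟩, w, hw⟩
      obtain ⟨hwf, hwg⟩ := mem_inter.mp hw
      refine ⟨w, ⟨fun hwq => hpq ?_, hwf⟩, hg, hpg, hge, hwg⟩
      exact hlin.eq_of_mem_of_mem hg he hge hpg hp (hwq ▸ hwg) hq
    · rintro ⟨w, ⟨-, hwf⟩, hg, hpg, hge, hwg⟩
      exact ⟨⟨hg, hpg, hge⟩, w, mem_inter.mpr ⟨hwf, hwg⟩⟩
  have hPw : ∀ w ∈ f.erase q, (P w).card = 1 := by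
    intro w hw
    obtain ⟨hwq, hwf⟩ := mem_erase.mp hw
    refine le_antisymm ((card_le_card fun g hg => ?_).trans
      (hlin.card_filter_mem_mem_le_one (ne_of_mem_of_not_mem hwf hpf).symm)) ?_
    · simp only [P, mem_filter] at hg ⊢
      exact ⟨hg.1, hg.2.1, hg.2.2.2⟩
    · obtain ⟨g, hg, hpg, hge, hwg⟩ :=
        exists_mem_mem_of_not_hasCrown hlin hfree he hdeg hp hq hpq hdp hf hqf hfe hwf hwq
      exact card_pos.mpr ⟨g, mem_filter.mpr ⟨hg, hpg, hge, hwg⟩⟩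
  -- a `p`-edge meeting `f` twice would be `f` itself
  have hPdisj : (f.erase q : Set V).PairwiseDisjoint P := by
    intro w hw w' hw' hww'
    refine disjoint_left.mpr fun g hgw hgw' => hww' ?_
    simp only [P, mem_filter] at hgw hgw'
    exact hlin.eq_of_mem_of_mem hf hgw.1 (fun hfg => hpf (hfg ▸ hgw.2.1))
      (mem_of_mem_erase hw) hgw.2.2.2 (mem_of_mem_erase hw') hgw'.2.2.2
  rw [hP, card_biUnion hPdisj, sum_congr rfl hPw, sum_const, smul_eq_mul, mul_one,
    card_erase_of_mem hqf, hlin.1 f hf]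

lemma exists_complete_bipartite (hlin : IsLinear r E) (hfree : ¬HasCrown r E) (he : e ∈ E)
    (hdeg : ∀ x ∈ e, (r - 1) ^ 2 ≤ degree E x) (hp : p ∈ e) (hq : q ∈ e) (hpq : p ≠ q)
    (hdp : (r - 1) ^ 2 < degree E p) (hdq : (r - 1) ^ 2 < degree E q) :
    ∃ A ⊆ E.filter (fun f => q ∈ f ∧ f ≠ e), ∃ B ⊆ E.filter (fun g => p ∈ g ∧ g ≠ e),
      A.card = r - 1 ∧ B.card = r - 1 ∧ ∀ f ∈ A, ∀ g ∈ B, (f ∩ g).Nonempty := by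
  obtain ⟨c, hc, -⟩ := exists_isLegSystem_erase_erase hlin he hdeg hp hq hpq (T := ∅) (by simp)
    (disjoint_empty_left e)
  set U := legsOff e ((e.erase p).erase q) c
  have hside : ∀ z ∈ e, (r - 1) ^ 2 < degree E z →
      ∃ A ⊆ E.filter (fun f => z ∈ f ∧ f ≠ e), A.card = r - 1 ∧ ∀ f ∈ A, Disjoint f U := by
    intro z hz hdz
    have := hlin.degree_le_card_filter_disjoint (S := U) (fun hz' => disjoint_left.mp
      (disjoint_legsOff _ _ _) hz' hz) e
    have : U.card ≤ (r - 2) * (r - 1) := card_erase_erase_legsOff_le hlin he hp hq hpq hc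
    have := sub_one_add_sub_two_mul_sub_one r
    obtain ⟨A, hA, hAcard⟩ := exists_subset_card_eq (show r - 1 ≤
      ((E.filter fun f => z ∈ f ∧ f ≠ e).filter (Disjoint · U)).card by omega)
    exact ⟨A, hA.trans (filter_subset _ _), hAcard, fun f hf => (mem_filter.mp (hA hf)).2⟩
  obtain ⟨A, hA, hAcard, hAU⟩ := hside q hq hdq
  obtain ⟨B, hB, hBcard, hBU⟩ := hside p hp hdp
  refine ⟨A, hA, B, hB, hAcard, hBcard, fun f hf g hg => ?_⟩
  obtain ⟨hfE, hqf, hfe⟩ := mem_filter.mp (hA hf)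
  obtain ⟨hgE, hpg, hge⟩ := mem_filter.mp (hB hg)
  by_contra hfg
  exact hfree (hc.hasCrown_of_erase_erase hlin he hp hq hpq hfE hqf hfe hgE hpg hge
    (disjoint_iff_inter_eq_empty.mpr (not_nonempty_iff_eq_empty.mp hfg))
    (fun x hx => hc.disjoint_of_disjoint_legsOff hlin he hq (by simp) hfE hqf hfe (hAU f hf) hx)
    (fun x hx => hc.disjoint_of_disjoint_legsOff hlin he hp (by simp) hgE hpg hge (hBU g hg) hx))

end Hypergraph

/-- The auxiliary bipartite graph `H_2` between the `u_2`-edges (other than `e`) and the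
`u_1`-edges (other than `e`), with adjacency given by nonempty intersection, is
`(r-1)`-regular with both sides of size `(r-1)^2`, and contains a `K_{r-1,r-1}`. -/
theorem auxiliary_bipartite {V : Type*} [DecidableEq V]
    (r : ℕ) (hr : 3 ≤ r) (E : Finset (Finset V)) (hlin : IsLinear r E)
    (hfree : ¬ HasCrown r E)
    (e : Finset V) (he : e ∈ E) (u : Fin r → V)
    (hinj : Function.Injective u) (hmem : ∀ i, u i ∈ e)
    (hd1 : degree E (u ⟨0, by omega⟩) = (r - 1) ^ 2 + 1)
    (hd2 : degree E (u ⟨1, by omega⟩) = (r - 1) ^ 2 + 1)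
    (hdi : ∀ i : Fin r, 2 ≤ (i : ℕ) → (r - 1) ^ 2 ≤ degree E (u i))
    (X Y : Finset (Finset V))
    (hX : X = E.filter (fun f => u ⟨1, by omega⟩ ∈ f ∧ f ≠ e))
    (hY : Y = E.filter (fun f => u ⟨0, by omega⟩ ∈ f ∧ f ≠ e)) :
    X.card = (r - 1) ^ 2 ∧ Y.card = (r - 1) ^ 2 ∧
    (∀ f ∈ X, (Y.filter (fun g => (f ∩ g).Nonempty)).card = r - 1) ∧
    (∀ g ∈ Y, (X.filter (fun f => (f ∩ g).Nonempty)).card = r - 1) ∧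
    (∃ A ⊆ X, ∃ B ⊆ Y, A.card = r - 1 ∧ B.card = r - 1 ∧
      ∀ f ∈ A, ∀ g ∈ B, (f ∩ g).Nonempty) := by
  subst hX hY
  have hpq : u ⟨0, by omega⟩ ≠ u ⟨1, by omega⟩ := hinj.ne (by simp)
  have hdeg : ∀ x ∈ e, (r - 1) ^ 2 ≤ degree E x := by
    intro x hx
    obtain ⟨i, -, rfl⟩ := surj_on_of_inj_on_of_card_le (s := univ) (fun i _ => u i)
      (fun i _ => hmem i) (fun i j _ _ hij => hinj hij) (by simp [hlin.1 e he]) x hx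
    rcases i with ⟨_ | _ | i, hi⟩
    · exact hd1 ▸ Nat.le_succ _
    · exact hd2 ▸ Nat.le_succ _
    · exact hdi _ (by simp)
  have hdp : (r - 1) ^ 2 < degree E (u ⟨0, by omega⟩) := by omega
  have hdq : (r - 1) ^ 2 < degree E (u ⟨1, by omega⟩) := by omega
  refine ⟨by simp [card_filter_mem_ne he (hmem _), hd2],
    by simp [card_filter_mem_ne he (hmem _), hd1],
    fun f hf => ?_, fun g hg => ?_,
    exists_complete_bipartite hlin hfree he hdeg (hmem _) (hmem _) hpq hdp hdq⟩
  · obtain ⟨hfE, hqf, hfe⟩ := mem_filter.mp hf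
    exact card_filter_inter_nonempty_eq hlin hfree he hdeg (hmem _) (hmem _) hpq hdp hfE hqf hfe
  · obtain ⟨hgE, hpg, hge⟩ := mem_filter.mp hg
    simp only [inter_comm _ g]
    exact card_filter_inter_nonempty_eq hlin hfree he hdeg (hmem _) (hmem _) hpq.symm hdq
      hgE hpg hge
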